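/- Let X ⊂ P^n_k be a set of r distinct points such that R/I(X) is Gorenstein with socle degree s, and let z be a linear nonzerodivisor on R/I(X). If F ∈ Γ is a homogeneous form of degree s with F ∈ I(X)^⊥ and z ∘ F = 0, and dim_k (R ∘ F) ≥ r, then R ∘ F = (I(X) + (z))^⊥ and dim_k (R ∘ F) = r. -/

import Mathlib

open MvPolynomial
open scoped Classical

noncomputable section

variable {k : Type} [Field k]

/-- Apolarity action: `apol f F = f(∂/∂y) F`, defined on monomials by
`x^α ∘ y^β = (β!/(β-α)!) y^(β-α)` if `α ≤ β` and `0` otherwise. -/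
def apol {n : ℕ} (f F : MvPolynomial (Fin n) k) : MvPolynomial (Fin n) k :=
  (AddMonoidAlgebra.coeff f).sum fun α c => (AddMonoidAlgebra.coeff F).sum fun β b =>
    if α ≤ β then
      MvPolynomial.monomial (β - α)
        (c * b * (β.prod fun i m => ((m.descFactorial (α i) : k))))
    else 0

/-- The linear form `a₀ y₀ + ⋯ + aₙ yₙ` associated to a point with coordinates `a`. -/
def dualLin {n : ℕ} (a : Fin n → k) : MvPolynomial (Fin n) k :=
  ∑ j, MvPolynomial.C (a j) * MvPolynomial.X j

/-- Macaulay inverse system of a set of polynomials. -/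
def perp {n : ℕ} (S : Set (MvPolynomial (Fin n) k)) : Set (MvPolynomial (Fin n) k) :=
  {F | ∀ g ∈ S, apol g F = 0}

/-- The `R`-submodule of `Γ` generated by `S` (as the `k`-span of the apolarity orbit). -/
def Rspan {n : ℕ} (S : Set (MvPolynomial (Fin n) k)) : Submodule k (MvPolynomial (Fin n) k) :=
  Submodule.span k {G | ∃ g, ∃ F ∈ S, G = apol g F}

/-- The homogeneous vanishing ideal of a family of points (given by affine representatives). -/
def projIdeal {n r : ℕ} (a : Fin r → Fin n → k) : Ideal (MvPolynomial (Fin n) k) :=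
  ⨅ i, ⨅ t : k, RingHom.ker (MvPolynomial.eval (t • a i))

/-- Hilbert function of `R/I`: `dim R_j − dim I_j`. -/
def HF {n : ℕ} (I : Ideal (MvPolynomial (Fin n) k)) (j : ℕ) : ℕ :=
  Module.finrank k (homogeneousSubmodule (Fin n) k j)
    - Module.finrank k
        (Submodule.restrictScalars k I ⊓ homogeneousSubmodule (Fin n) k j : Submodule k _)

/-- `s` is the socle degree: least integer with `HF I t = r` for all `t ≥ s`. -/
def IsSocleDegree {n : ℕ} (I : Ideal (MvPolynomial (Fin n) k)) (r s : ℕ) : Prop :=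
  (∀ t, s ≤ t → HF I t = r) ∧ ∀ s', (∀ t, s' ≤ t → HF I t = r) → s ≤ s'

/-- The affine representatives define distinct points of projective space. -/
def ProjDistinct {n r : ℕ} (a : Fin r → Fin n → k) : Prop :=
  (∀ i, a i ≠ 0) ∧ ∀ i j, i ≠ j → ∀ c : k, a i ≠ c • a j

/-- G-admissibility (with `F 0` playing the role of `F₁`). -/
def GAdmissible {n : ℕ} (z : MvPolynomial (Fin n) k) (F : ℕ → MvPolynomial (Fin n) k) : Prop :=
  apol z (F 0) = 0 ∧ (∀ l, apol z (F (l + 1)) = F l) ∧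
  ∀ l, (fun g => apol g (F (l + 1))) '' {g | ∀ G ∈ (Rspan {F l} : Submodule k (MvPolynomial (Fin n) k)), apol g G = 0}
      = ((Rspan {F 0} : Submodule k (MvPolynomial (Fin n) k)) : Set (MvPolynomial (Fin n) k))

/-- The family `F_t = (1/(t+u)!) Σ αᵢ Lᵢ^{t+u}`. -/
def famF {n r : ℕ} (a : Fin r → Fin n → k) (α : Fin r → k) (u t : ℕ) :
    MvPolynomial (Fin n) k :=
  (((t + u).factorial : k))⁻¹ • ∑ i, MvPolynomial.C (α i) * dualLin (a i) ^ (t + u)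

/-- `X` is arithmetically Gorenstein, tested with the linear nonzerodivisor `z`:
the inverse system of the Artinian reduction `I(X)+(z)` is cyclic. -/
def IsArithGorAt {n r : ℕ} (a : Fin r → Fin n → k) (z : MvPolynomial (Fin n) k) : Prop :=
  ∃ F, perp ((projIdeal a ⊔ Ideal.span {z} : Ideal _) : Set (MvPolynomial (Fin n) k))
    = ((Rspan {F} : Submodule k (MvPolynomial (Fin n) k)) : Set (MvPolynomial (Fin n) k))

/-- `X` is arithmetically Gorenstein (for some linear form not vanishing at any point). -/
def IsArithGor {n r : ℕ} (a : Fin r → Fin n → k) : Prop :=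
  ∃ b : Fin n → k, (∀ i, (∑ j, b j * a i j) ≠ 0) ∧ IsArithGorAt a (dualLin b)

/-!
Since `F ∈ I(X)^⊥` and `z ∘ F = 0`, the `R`-module `R ∘ F` lies in `(I(X) + (z))^⊥`, so it suffices
to show `dim_k (I(X) + (z))^⊥ ≤ r`. In each degree `j` the apolarity pairing `R_j × R_j → k` is
perfect (characteristic zero), so the degree-`j` part of the inverse system of `J = I(X) + (z)` has
dimension at most `HF_J(j)`. As `z` is a linear nonzerodivisor on `R/I(X)`,
`HF_J(j) ≤ HF_I(j) - HF_I(j-1)`; these bounds vanish beyond the socle degree `s` and add up to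
`HF_I(s) = r`.
-/

open Module

section Apolarity

variable {n : ℕ}

def descFactorialProd (α β : Fin n →₀ ℕ) : ℕ := ∏ i, (β i).descFactorial (α i)

lemma descFactorialProd_eq_zero {α β : Fin n →₀ ℕ} (h : ¬ α ≤ β) :
    descFactorialProd α β = 0 := by
  obtain ⟨i, hi⟩ : ∃ i, β i < α i := by simpa [Finsupp.le_def] using h
  exact Finset.prod_eq_zero (Finset.mem_univ i) (Nat.descFactorial_eq_zero_iff_lt.mpr hi)

lemma descFactorialProd_add (α γ β : Fin n →₀ ℕ) :
    descFactorialProd (α + γ) β = descFactorialProd α (β - γ) * descFactorialProd γ β := by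
  simp only [descFactorialProd, ← Finset.prod_mul_distrib]
  refine Finset.prod_congr rfl fun i _ => ?_
  rw [Finsupp.add_apply, Finsupp.tsub_apply, add_comm (α i),
    ← Nat.descFactorial_mul_descFactorial (Nat.le_add_right (γ i) (α i)), Nat.add_sub_cancel_left]

lemma apol_eq_sum_support (f F : MvPolynomial (Fin n) k) :
    apol f F = ∑ α ∈ f.support, ∑ β ∈ F.support,
      monomial (β - α) (coeff α f * coeff β F * (descFactorialProd α β : k)) := by
  refine Finset.sum_congr rfl fun α _ => Finset.sum_congr rfl fun β _ => ?_
  dsimp only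
  split_ifs with h
  · congr 2
    rw [Finsupp.prod, descFactorialProd, Nat.cast_prod]
    refine Finset.prod_subset (Finset.subset_univ _) fun i _ hi => ?_
    have hβ : β i = 0 := Finsupp.notMem_support_iff.mp hi
    simp [hβ, Nat.le_zero.mp (hβ ▸ h i)]
  · simp [descFactorialProd_eq_zero h]

lemma apol_eq_sum {f F : MvPolynomial (Fin n) k} {A B : Finset (Fin n →₀ ℕ)}
    (hA : f.support ⊆ A) (hB : F.support ⊆ B) :
    apol f F = ∑ α ∈ A, ∑ β ∈ B,
      monomial (β - α) (coeff α f * coeff β F * (descFactorialProd α β : k)) := by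
  rw [apol_eq_sum_support]
  refine (Finset.sum_congr rfl fun α _ => Finset.sum_subset hB fun β _ hβ => ?_).trans
    (Finset.sum_subset hA fun α _ hα => Finset.sum_eq_zero fun β _ => ?_)
  · simp [notMem_support_iff.mp hβ]
  · simp [notMem_support_iff.mp hα]

lemma apol_add_left (f g F : MvPolynomial (Fin n) k) :
    apol (f + g) F = apol f F + apol g F := by
  rw [apol_eq_sum support_add le_rfl, apol_eq_sum Finset.subset_union_left le_rfl,
    apol_eq_sum Finset.subset_union_right le_rfl, ← Finset.sum_add_distrib]
  refine Finset.sum_congr rfl fun α _ => ?_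
  rw [← Finset.sum_add_distrib]
  simp only [coeff_add, add_mul, map_add]

lemma apol_add_right (f F G : MvPolynomial (Fin n) k) :
    apol f (F + G) = apol f F + apol f G := by
  rw [apol_eq_sum le_rfl support_add, apol_eq_sum le_rfl Finset.subset_union_left,
    apol_eq_sum le_rfl Finset.subset_union_right, ← Finset.sum_add_distrib]
  refine Finset.sum_congr rfl fun α _ => ?_
  rw [← Finset.sum_add_distrib]
  simp only [coeff_add, mul_add, add_mul, map_add]

lemma apol_smul_left (c : k) (f F : MvPolynomial (Fin n) k) :
    apol (c • f) F = c • apol f F := by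
  rw [apol_eq_sum (f := c • f) support_smul le_rfl, apol_eq_sum le_rfl le_rfl]
  simp only [Finset.smul_sum, coeff_smul, smul_monomial, smul_eq_mul, mul_assoc]

lemma apol_smul_right (c : k) (f F : MvPolynomial (Fin n) k) :
    apol f (c • F) = c • apol f F := by
  rw [apol_eq_sum (F := c • F) le_rfl support_smul, apol_eq_sum le_rfl le_rfl]
  simp only [Finset.smul_sum, coeff_smul, smul_monomial, smul_eq_mul, mul_left_comm c, mul_assoc]

def apolLin : MvPolynomial (Fin n) k →ₗ[k] MvPolynomial (Fin n) k →ₗ[k] MvPolynomial (Fin n) k :=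
  LinearMap.mk₂ k apol apol_add_left apol_smul_left apol_add_right apol_smul_right

@[simp] lemma apolLin_apply (f F : MvPolynomial (Fin n) k) : apolLin f F = apol f F := rfl

lemma apol_zero_right (f : MvPolynomial (Fin n) k) : apol f 0 = 0 :=
  map_zero (apolLin f)

lemma apol_monomial_monomial (α β : Fin n →₀ ℕ) (c b : k) :
    apol (monomial α c) (monomial β b)
      = monomial (β - α) (c * b * (descFactorialProd α β : k)) := by
  rw [apol_eq_sum support_monomial_subset support_monomial_subset]
  simp

lemma apol_mul (f g F : MvPolynomial (Fin n) k) : apol (f * g) F = apol f (apol g F) := by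
  induction f using MvPolynomial.induction_on' with
  | add p q hp hq => rw [add_mul, apol_add_left, apol_add_left, hp, hq]
  | monomial α c =>
  induction g using MvPolynomial.induction_on' with
  | add p q hp hq => rw [mul_add, apol_add_left, apol_add_left, hp, hq, apol_add_right]
  | monomial γ d =>
  induction F using MvPolynomial.induction_on' with
  | add p q hp hq => rw [apol_add_right, apol_add_right, hp, hq, apol_add_right]
  | monomial β b =>
    rw [monomial_mul, apol_monomial_monomial, apol_monomial_monomial, apol_monomial_monomial,
      tsub_add_eq_tsub_tsub_swap, descFactorialProd_add]
    push_cast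
    ring_nf

lemma apol_comm (f g F : MvPolynomial (Fin n) k) : apol f (apol g F) = apol g (apol f F) := by
  rw [← apol_mul, mul_comm, apol_mul]

lemma MvPolynomial.IsHomogeneous.apol {f F : MvPolynomial (Fin n) k} {d e : ℕ}
    (hf : f.IsHomogeneous d) (hF : F.IsHomogeneous e) :
    (apol f F).IsHomogeneous (e - d) := by
  rw [apol_eq_sum_support]
  refine IsHomogeneous.sum _ _ _ fun α hα => IsHomogeneous.sum _ _ _ fun β hβ => ?_
  by_cases hle : α ≤ β
  · refine isHomogeneous_monomial _ ?_
    have hsum := map_add Finsupp.degree (β - α) α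
    rw [tsub_add_cancel_of_le hle] at hsum
    have hα' : α.degree = d := (hf.degree_eq_sum_deg_support hα).symm
    have hβ' : β.degree = e := (hF.degree_eq_sum_deg_support hβ).symm
    omega
  · simpa [descFactorialProd_eq_zero hle] using isHomogeneous_zero _ _ _

lemma apol_eq_zero_of_lt {f F : MvPolynomial (Fin n) k} {d e : ℕ}
    (hf : f.IsHomogeneous d) (hF : F.IsHomogeneous e) (h : e < d) : apol f F = 0 := by
  rw [apol_eq_sum_support]
  refine Finset.sum_eq_zero fun α hα => Finset.sum_eq_zero fun β hβ => ?_
  have hle : ¬ α ≤ β := fun hle => by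
    have := Finsupp.degree_mono hle
    have hα' : α.degree = d := (hf.degree_eq_sum_deg_support hα).symm
    have hβ' : β.degree = e := (hF.degree_eq_sum_deg_support hβ).symm
    omega
  simp [descFactorialProd_eq_zero hle]

end Apolarity

section Pairing

variable {n : ℕ}

lemma homogeneousComponent_apol {g : MvPolynomial (Fin n) k} {d : ℕ} (hg : g.IsHomogeneous d)
    (F : MvPolynomial (Fin n) k) (e : ℕ) :
    homogeneousComponent e (apol g F) = apol g (homogeneousComponent (e + d) F) := by
  have hterm : ∀ i, homogeneousComponent e (apol g (homogeneousComponent i F))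
      = if i = e + d then apol g (homogeneousComponent i F) else 0 := by
    intro i
    rcases lt_or_ge i d with hid | hdi
    · rw [apol_eq_zero_of_lt hg (homogeneousComponent_isHomogeneous i F) hid, map_zero, ite_self]
    · rw [homogeneousComponent_of_mem (hg.apol (homogeneousComponent_isHomogeneous i F))]
      exact if_congr (by omega) rfl rfl
  conv_lhs => rw [← sum_homogeneousComponent F, ← apolLin_apply, map_sum, map_sum]
  simp only [apolLin_apply, hterm, Finset.sum_ite_eq', Finset.mem_range]
  split_ifs with h
  · rfl
  · rw [homogeneousComponent_eq_zero _ _ (by omega), apol_zero_right]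

lemma constantCoeff_apol_monomial (α : Fin n →₀ ℕ) (F : MvPolynomial (Fin n) k) :
    constantCoeff (apol (monomial α 1) F) = ((∏ i, (α i).factorial : ℕ) : k) * coeff α F := by
  induction F using MvPolynomial.induction_on' with
  | add p q hp hq => rw [apol_add_right, map_add, hp, hq, coeff_add, mul_add]
  | monomial β b =>
    rw [apol_monomial_monomial, constantCoeff_monomial, coeff_monomial]
    by_cases hle : α ≤ β
    · have hsub : β - α = 0 ↔ β = α := ⟨fun h => le_antisymm (tsub_eq_zero_iff_le.mp h) hle,
        fun h => h ▸ tsub_self α⟩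
      simp only [hsub]
      split_ifs with h
      · subst h
        simp [descFactorialProd, Nat.descFactorial_self, mul_comm]
      · rw [mul_zero]
    · have hne : β ≠ α := fun h => hle (h ▸ le_rfl)
      simp [descFactorialProd_eq_zero hle, hne]

lemma eq_zero_of_constantCoeff_apol_monomial [CharZero k] {F : MvPolynomial (Fin n) k} {e : ℕ}
    (hF : F.IsHomogeneous e)
    (h : ∀ α : Fin n →₀ ℕ, α.degree = e → constantCoeff (apol (monomial α 1) F) = 0) :
    F = 0 := by
  ext β
  rw [coeff_zero]
  by_cases hβ : β.degree = e
  · have := h β hβ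
    rw [constantCoeff_apol_monomial] at this
    refine (mul_eq_zero.mp this).resolve_left ?_
    exact_mod_cast Finset.prod_ne_zero_iff.mpr fun i _ => Nat.factorial_ne_zero _
  · exact hF.coeff_eq_zero hβ

instance (j : ℕ) : FiniteDimensional k (homogeneousSubmodule (Fin n) k j) :=
  Submodule.finiteDimensional_of_le (S₂ := restrictTotalDegree (Fin n) k j)
    fun _ hp => (mem_restrictTotalDegree _ _ _).mpr
      ((mem_homogeneousSubmodule _ _).mp hp).totalDegree_le

/-- `⟨g, F⟩ = (g ∘ F)(0)`; for `g, F ∈ R_j` the form `g ∘ F` is a constant, so `F` is orthogonal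
to `g` exactly when `g ∘ F = 0`. -/
def apolarPairing (j : ℕ) :
    homogeneousSubmodule (Fin n) k j →ₗ[k] Dual k (homogeneousSubmodule (Fin n) k j) :=
  (apolLin.compr₂ (lcoeff k 0)).flip.compl₁₂
    (homogeneousSubmodule (Fin n) k j).subtype (homogeneousSubmodule (Fin n) k j).subtype

lemma apolarPairing_bijective [CharZero k] (j : ℕ) :
    Function.Bijective (apolarPairing (k := k) (n := n) j) := by
  have hinj : Function.Injective (apolarPairing (k := k) (n := n) j) := by
    rw [← LinearMap.ker_eq_bot, Submodule.eq_bot_iff]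
    intro F hF
    ext1
    refine eq_zero_of_constantCoeff_apol_monomial F.2 fun α hα => ?_
    exact LinearMap.congr_fun hF ⟨monomial α 1, isHomogeneous_monomial _ hα⟩
  exact ⟨hinj, (LinearMap.injective_iff_surjective_of_finrank_eq_finrank
    Subspace.dual_finrank_eq.symm).mp hinj⟩

end Pairing

section InverseSystem

variable {n : ℕ}

def inverseSystem (J : Ideal (MvPolynomial (Fin n) k)) : Submodule k (MvPolynomial (Fin n) k) where
  carrier := perp J
  add_mem' hF hG g hg := by rw [apol_add_right, hF g hg, hG g hg, add_zero]
  zero_mem' g _ := apol_zero_right g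
  smul_mem' c F hF g hg := by rw [apol_smul_right, hF g hg, smul_zero]

lemma Rspan_singleton_le_inverseSystem {J : Ideal (MvPolynomial (Fin n) k)}
    {F : MvPolynomial (Fin n) k} (hF : F ∈ inverseSystem J) : Rspan {F} ≤ inverseSystem J := by
  rw [Rspan, Submodule.span_le]
  rintro _ ⟨g, _, rfl, rfl⟩ h hh
  rw [apol_comm, hF h hh, apol_zero_right]

lemma mem_inverseSystem_sup_span {I : Ideal (MvPolynomial (Fin n) k)}
    {z F : MvPolynomial (Fin n) k} (hF : F ∈ perp (I : Set (MvPolynomial (Fin n) k)))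
    (hzF : apol z F = 0) : F ∈ inverseSystem (I ⊔ Ideal.span {z}) := by
  intro g hg
  obtain ⟨p, hp, _, hq, rfl⟩ := Submodule.mem_sup.mp hg
  obtain ⟨q, rfl⟩ := Ideal.mem_span_singleton'.mp hq
  rw [apol_add_left, apol_mul, hF p hp, hzF, apol_zero_right, add_zero]

def homogeneousPart (J : Ideal (MvPolynomial (Fin n) k)) (j : ℕ) :
    Submodule k (MvPolynomial (Fin n) k) :=
  J.restrictScalars k ⊓ homogeneousSubmodule (Fin n) k j

instance (J : Ideal (MvPolynomial (Fin n) k)) (j : ℕ) :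
    FiniteDimensional k (homogeneousPart J j) :=
  Submodule.finiteDimensional_of_le inf_le_right

lemma finrank_homogeneousPart_le (J : Ideal (MvPolynomial (Fin n) k)) (j : ℕ) :
    finrank k (homogeneousPart J j) ≤ finrank k (homogeneousSubmodule (Fin n) k j) :=
  Submodule.finrank_mono inf_le_right

lemma homogeneousPart_mono {I J : Ideal (MvPolynomial (Fin n) k)} (hIJ : I ≤ J) (j : ℕ) :
    homogeneousPart I j ≤ homogeneousPart J j :=
  inf_le_inf_right _ (Submodule.restrictScalars_mono k hIJ)

lemma HF_eq (J : Ideal (MvPolynomial (Fin n) k)) (j : ℕ) :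
    HF J j = finrank k (homogeneousSubmodule (Fin n) k j) - finrank k (homogeneousPart J j) :=
  rfl

def pairingWithHomogeneousPart (J : Ideal (MvPolynomial (Fin n) k)) (j : ℕ) :
    homogeneousSubmodule (Fin n) k j →ₗ[k] Dual k (homogeneousPart J j) :=
  (Submodule.inclusion inf_le_right).dualMap ∘ₗ apolarPairing j

def homogeneousPerp (J : Ideal (MvPolynomial (Fin n) k)) (j : ℕ) :
    Submodule k (MvPolynomial (Fin n) k) :=
  (LinearMap.ker (pairingWithHomogeneousPart J j)).map (homogeneousSubmodule (Fin n) k j).subtype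

instance (J : Ideal (MvPolynomial (Fin n) k)) (j : ℕ) :
    FiniteDimensional k (homogeneousPerp J j) :=
  Submodule.finiteDimensional_of_le (Submodule.map_subtype_le _ _)

lemma finrank_homogeneousPerp [CharZero k] (J : Ideal (MvPolynomial (Fin n) k)) (j : ℕ) :
    finrank k (homogeneousPerp J j) = HF J j := by
  have hsurj : Function.Surjective (pairingWithHomogeneousPart J j) :=
    (LinearMap.dualMap_surjective_of_injective (Submodule.inclusion_injective _)).comp
      (apolarPairing_bijective j).2
  have := LinearMap.finrank_range_add_finrank_ker (pairingWithHomogeneousPart J j)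
  rw [LinearMap.range_eq_top.mpr hsurj, finrank_top, Subspace.dual_finrank_eq] at this
  rw [HF_eq, homogeneousPerp, ← LinearEquiv.finrank_eq
    (Submodule.equivMapOfInjective _ (Submodule.injective_subtype _) _)]
  omega

lemma homogeneousComponent_mem_homogeneousPerp {J : Ideal (MvPolynomial (Fin n) k)}
    {F : MvPolynomial (Fin n) k} (hF : F ∈ perp (J : Set (MvPolynomial (Fin n) k))) (j : ℕ) :
    homogeneousComponent j F ∈ homogeneousPerp J j := by
  refine ⟨⟨_, homogeneousComponent_mem j F⟩, LinearMap.ext fun ⟨g, hgJ, hgj⟩ => ?_, rfl⟩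
  have := homogeneousComponent_apol hgj F 0
  rw [hF g hgJ, zero_add, map_zero] at this
  show constantCoeff (apol g (homogeneousComponent j F)) = 0
  rw [← this, map_zero]

def homogeneousComponentPerp (J : Ideal (MvPolynomial (Fin n) k)) (j : ℕ) :
    inverseSystem J →ₗ[k] homogeneousPerp J j :=
  ((homogeneousComponent j).comp (inverseSystem J).subtype).codRestrict (homogeneousPerp J j)
    fun F => homogeneousComponent_mem_homogeneousPerp F.2 j

def inverseSystemComponents (J : Ideal (MvPolynomial (Fin n) k)) (s : ℕ) :
    inverseSystem J →ₗ[k] (j : Fin (s + 1)) → homogeneousPerp J j :=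
  LinearMap.pi fun j => homogeneousComponentPerp J j

variable [CharZero k] {J : Ideal (MvPolynomial (Fin n) k)} {s : ℕ}

lemma inverseSystemComponents_injective (hJ : ∀ j, s < j → HF J j = 0) :
    Function.Injective (inverseSystemComponents J s) := by
  rw [← LinearMap.ker_eq_bot, Submodule.eq_bot_iff]
  rintro ⟨F, hF⟩ h0
  ext1
  show F = 0
  rw [← sum_homogeneousComponent F]
  refine Finset.sum_eq_zero fun j _ => ?_
  rcases le_or_gt j s with hjs | hsj
  · exact congrArg Subtype.val (congr_fun h0 ⟨j, Nat.lt_succ_of_le hjs⟩)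
  · have hbot : homogeneousPerp J j = ⊥ :=
      Submodule.finrank_eq_zero.mp ((finrank_homogeneousPerp J j).trans (hJ j hsj))
    have := homogeneousComponent_mem_homogeneousPerp hF j
    rwa [hbot, Submodule.mem_bot] at this

lemma finiteDimensional_inverseSystem (hJ : ∀ j, s < j → HF J j = 0) :
    FiniteDimensional k (inverseSystem J) :=
  FiniteDimensional.of_injective _ (inverseSystemComponents_injective hJ)

lemma finrank_inverseSystem_le (hJ : ∀ j, s < j → HF J j = 0) :
    finrank k (inverseSystem J) ≤ ∑ j ∈ Finset.range (s + 1), HF J j := by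
  calc finrank k (inverseSystem J)
      ≤ finrank k ((j : Fin (s + 1)) → homogeneousPerp J j) :=
        LinearMap.finrank_le_finrank_of_injective (inverseSystemComponents_injective hJ)
    _ = ∑ j ∈ Finset.range (s + 1), HF J j := by
        rw [Module.finrank_pi_fintype, ← Fin.sum_univ_eq_sum_range]
        simp only [finrank_homogeneousPerp]

end InverseSystem

lemma finrank_add_finrank_le_of_comap_le {K V V' : Type*} [Field K] [AddCommGroup V] [Module K V]
    [AddCommGroup V'] [Module K V'] (μ : V →ₗ[K] V') {U B : Submodule K V} {A W : Submodule K V'}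
    [FiniteDimensional K U] [FiniteDimensional K W] (hBU : B ≤ U) (hAW : A ≤ W)
    (hμ : ∀ u ∈ U, μ u ∈ W) (hB : ∀ u ∈ U, μ u ∈ A → u ∈ B) :
    finrank K A + finrank K U ≤ finrank K W + finrank K B := by
  let A' := A.comap W.subtype
  let q : U →ₗ[K] W ⧸ A' := A'.mkQ ∘ₗ μ.restrict hμ
  have hker : finrank K (LinearMap.ker q) ≤ finrank K B := by
    rw [← (Submodule.comapSubtypeEquivOfLe hBU).finrank_eq]
    refine Submodule.finrank_mono fun u hu => hB u u.2 ?_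
    simpa [q, A'] using hu
  have : finrank K (LinearMap.range q) + finrank K (LinearMap.ker q) = finrank K U :=
    LinearMap.finrank_range_add_finrank_ker q
  calc finrank K A + finrank K U
      = finrank K A' + (finrank K (LinearMap.range q) + finrank K (LinearMap.ker q)) := by
        rw [(Submodule.comapSubtypeEquivOfLe hAW).finrank_eq, this]
    _ ≤ finrank K A' + (finrank K (W ⧸ A') + finrank K B) := by
        gcongr
        exact Submodule.finrank_le _
    _ = finrank K W + finrank K B := by
        rw [← A'.finrank_quotient_add_finrank]
        ring

section HilbertFunction

variable {n : ℕ} {I J : Ideal (MvPolynomial (Fin n) k)} {z : MvPolynomial (Fin n) k}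

def IsHomogeneousNonZeroDivisor (I : Ideal (MvPolynomial (Fin n) k)) (z : MvPolynomial (Fin n) k) :
    Prop :=
  ∀ j q, q.IsHomogeneous j → q * z ∈ I → q ∈ I

lemma HF_anti (hIJ : I ≤ J) (j : ℕ) : HF J j ≤ HF I j := by
  rw [HF_eq, HF_eq]
  exact Nat.sub_le_sub_left (Submodule.finrank_mono (homogeneousPart_mono hIJ j)) _

lemma HF_add_HF_le {d : ℕ} (hz : z.IsHomogeneous d) (hzJ : z ∈ J) (hIJ : I ≤ J)
    (hnzd : IsHomogeneousNonZeroDivisor I z) (j : ℕ) :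
    HF J (j + d) + HF I j ≤ HF I (j + d) := by
  have := finrank_add_finrank_le_of_comap_le (LinearMap.mulRight k z)
    (U := homogeneousSubmodule (Fin n) k j) (B := homogeneousPart I j)
    (A := homogeneousPart I (j + d)) (W := homogeneousPart J (j + d))
    inf_le_right (homogeneousPart_mono hIJ _)
    (fun q hq => ⟨J.mul_mem_left q hzJ, hq.mul hz⟩)
    (fun q hq hqz => ⟨hnzd j q hq hqz.1, hq⟩)
  have := finrank_homogeneousPart_le J (j + d)
  have := finrank_homogeneousPart_le I j
  rw [HF_eq, HF_eq, HF_eq]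
  omega

lemma sum_range_HF_le (hz : z.IsHomogeneous 1) (hzJ : z ∈ J) (hIJ : I ≤ J)
    (hnzd : IsHomogeneousNonZeroDivisor I z) (N : ℕ) :
    ∑ j ∈ Finset.range (N + 1), HF J j ≤ HF I N := by
  induction N with
  | zero => simpa using HF_anti hIJ 0
  | succ N ih =>
    rw [Finset.sum_range_succ]
    have := HF_add_HF_le hz hzJ hIJ hnzd N
    omega

lemma HF_eq_zero_of_lt (hz : z.IsHomogeneous 1) (hzJ : z ∈ J) (hIJ : I ≤ J)
    (hnzd : IsHomogeneousNonZeroDivisor I z) {r s : ℕ} (hI : ∀ t, s ≤ t → HF I t = r) {j : ℕ}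
    (hj : s < j) : HF J j = 0 := by
  obtain ⟨t, rfl⟩ : ∃ t, j = t + 1 := ⟨j - 1, by omega⟩
  have := HF_add_HF_le hz hzJ hIJ hnzd t
  rw [hI t (by omega), hI (t + 1) hj.le] at this
  omega

end HilbertFunction

lemma MvPolynomial.IsHomogeneous.eval_smul {σ R : Type*} [CommSemiring R]
    {φ : MvPolynomial σ R} {m : ℕ} (hφ : φ.IsHomogeneous m) (t : R) (x : σ → R) :
    eval (t • x) φ = t ^ m * eval x φ := by
  simp only [eval_eq, Finset.mul_sum]
  refine Finset.sum_congr rfl fun d hd => ?_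
  rw [hφ.degree_eq_sum_deg_support hd]
  simp only [Pi.smul_apply, smul_eq_mul, mul_pow, Finset.prod_mul_distrib,
    Finset.prod_pow_eq_pow_sum]
  ring

section Points

variable {n r : ℕ}

lemma eval_dualLin (b x : Fin n → k) : eval x (dualLin b) = ∑ j, b j * x j := by
  simp [dualLin]

lemma isHomogeneous_dualLin (b : Fin n → k) : (dualLin b).IsHomogeneous 1 :=
  IsHomogeneous.sum _ _ _ fun j _ => isHomogeneous_C_mul_X (b j) j

lemma MvPolynomial.IsHomogeneous.mem_projIdeal_iff {φ : MvPolynomial (Fin n) k} {m : ℕ}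
    (hφ : φ.IsHomogeneous m) (a : Fin r → Fin n → k) :
    φ ∈ projIdeal a ↔ ∀ i, eval (a i) φ = 0 := by
  simp only [projIdeal, Ideal.mem_iInf, RingHom.mem_ker, hφ.eval_smul]
  exact ⟨fun h i => by simpa using h i 1, fun h i t => by rw [h i, mul_zero]⟩

lemma isHomogeneousNonZeroDivisor_projIdeal_dualLin {a : Fin r → Fin n → k} {b : Fin n → k}
    (hz : ∀ i, (∑ j, b j * a i j) ≠ 0) : IsHomogeneousNonZeroDivisor (projIdeal a) (dualLin b) := by
  intro m q hq h
  rw [(hq.mul (isHomogeneous_dualLin b)).mem_projIdeal_iff] at h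
  rw [hq.mem_projIdeal_iff]
  intro i
  simpa [eval_dualLin, hz i] using h i

end Points

theorem stmt18_general [CharZero k] (n r s : ℕ)
    (a : Fin r → Fin (n + 1) → k)
    (hs : IsSocleDegree (projIdeal a) r s)
    (b : Fin (n + 1) → k) (hz : ∀ i, (∑ j, b j * a i j) ≠ 0)
    (F : MvPolynomial (Fin (n + 1)) k)
    (hFperp : F ∈ perp ((projIdeal a : Ideal (MvPolynomial (Fin (n + 1)) k)) : Set (MvPolynomial (Fin (n + 1)) k)))
    (hzF : apol (dualLin b) F = 0)
    (hdim : r ≤ Module.finrank k (Rspan {F})) :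
    ((Rspan {F} : Submodule k (MvPolynomial (Fin (n + 1)) k)) : Set (MvPolynomial (Fin (n + 1)) k))
        = perp ((projIdeal a ⊔ Ideal.span {dualLin b} :
            Ideal (MvPolynomial (Fin (n + 1)) k)) : Set (MvPolynomial (Fin (n + 1)) k))
    ∧ Module.finrank k (Rspan {F}) = r := by
  have hzJ : dualLin b ∈ projIdeal a ⊔ Ideal.span {dualLin b} :=
    Ideal.mem_sup_right (Ideal.mem_span_singleton_self _)
  have hnzd := isHomogeneousNonZeroDivisor_projIdeal_dualLin hz
  have hJ : ∀ j, s < j → HF (projIdeal a ⊔ Ideal.span {dualLin b}) j = 0 := fun j =>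
    HF_eq_zero_of_lt (isHomogeneous_dualLin b) hzJ le_sup_left hnzd hs.1
  have := finiteDimensional_inverseSystem hJ
  have hle : finrank k (inverseSystem (projIdeal a ⊔ Ideal.span {dualLin b})) ≤ r :=
    (finrank_inverseSystem_le hJ).trans <|
      (sum_range_HF_le (isHomogeneous_dualLin b) hzJ le_sup_left hnzd s).trans_eq (hs.1 s le_rfl)
  have heq : Rspan {F} = inverseSystem (projIdeal a ⊔ Ideal.span {dualLin b}) :=
    Submodule.eq_of_le_of_finrank_le
      (Rspan_singleton_le_inverseSystem (mem_inverseSystem_sup_span hFperp hzF)) (hle.trans hdim)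
  exact ⟨congrArg SetLike.coe heq, le_antisymm (heq ▸ hle) hdim⟩

/-- if `F` is homogeneous of degree `s`, `F ∈ I(X)^⊥`, `z ∘ F = 0` and
`dim_k (R∘F) ≥ r`, then `R∘F = (I(X)+(z))^⊥` and `dim_k (R∘F) = r`. -/
theorem stmt18 [CharZero k] [IsAlgClosed k] (n r s : ℕ)
    (a : Fin r → Fin (n + 1) → k) (ha : ProjDistinct a)
    (hs : IsSocleDegree (projIdeal a) r s)
    (b : Fin (n + 1) → k) (hz : ∀ i, (∑ j, b j * a i j) ≠ 0)
    (hGor : IsArithGorAt a (dualLin b))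
    (F : MvPolynomial (Fin (n + 1)) k) (hFhom : F.IsHomogeneous s)
    (hFperp : F ∈ perp ((projIdeal a : Ideal (MvPolynomial (Fin (n + 1)) k)) : Set (MvPolynomial (Fin (n + 1)) k)))
    (hzF : apol (dualLin b) F = 0)
    (hdim : r ≤ Module.finrank k (Rspan {F})) :
    ((Rspan {F} : Submodule k (MvPolynomial (Fin (n + 1)) k)) : Set (MvPolynomial (Fin (n + 1)) k))
        = perp ((projIdeal a ⊔ Ideal.span {dualLin b} :
            Ideal (MvPolynomial (Fin (n + 1)) k)) : Set (MvPolynomial (Fin (n + 1)) k))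
    ∧ Module.finrank k (Rspan {F}) = r :=
  stmt18_general n r s a hs b hz F hFperp hzF hdim

end
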